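/- arXiv:1902.01171 — 3 statements merged into one kernel-verified Lean document; each statement's English description precedes it below -/
import Mathlib

section
/- For the random walk on a finite connected weighted graph G = (V,E,C) and any two distinct vertices x, y ∈ V, the quantity (U_w^{xy} + U_w^{yx})/μ_w is independent of the vertex w ∈ V; that is, there is a constant R_{xy} (the effective resistance between x and y) such that U_w^{xy} + U_w^{yx} = R_{xy} · μ_w for all w ∈ V. -/
/-!
Write `Q` for the transition matrix of the walk killed at `y`. Its Neumann series `∑ Qⁿ`
converges: by connectivity, from every vertex some power of `Q` has row sum `< 1`, and taking a
uniform such power gives a geometric bound on the row sums. The Green row `G = ∑ₙ Qⁿ(x, ·)`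
satisfies `G = δₓ + G Q`, and `G(y) = 1` because the walk reaches `y` almost surely. Hence
`U^{xy} P = U^{xy} + δ_y - δ_x`, so the round-trip occupation `f = U^{xy} + U^{yx}` is a
stationary measure of `P`. By reversibility `f / μ` is harmonic, and by the maximum principle
on the connected graph it is constant.
-/

open Finset

variable {V : Type*} [Fintype V] [DecidableEq V]

/-- The weight (generalized degree) of a node: `μ_x = ∑_y c x y`. -/
noncomputable def nodeWeight (c : V → V → ℝ) (x : V) : ℝ := ∑ y, c x y

/-- Transition probabilities of the random walk: `p x y = c x y / μ x`. -/
noncomputable def transProb (c : V → V → ℝ) (x y : V) : ℝ := c x y / nodeWeight c x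

/-- The transition matrix killed at the target node `y` (rows at `y` set to zero), so that
`(killed c y ^ n) x z = P^x(X_0 ≠ y, …, X_{n-1} ≠ y, X_n = z)`. -/
noncomputable def killed (c : V → V → ℝ) (y : V) : Matrix V V ℝ :=
  Matrix.of fun u v => if u = y then 0 else transProb c u v

/-- The survival probability `P^x(τ_y > n)` of the walk started at `x`. -/
noncomputable def survival (c : V → V → ℝ) (x y : V) (n : ℕ) : ℝ :=
  ∑ z ∈ Finset.univ.erase y, (killed c y ^ n) x z

/-- The expected hitting time `E^x(τ_y) = ∑_{n ≥ 0} P^x(τ_y > n)`. -/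
noncomputable def hitExp (c : V → V → ℝ) (x y : V) : ℝ := ∑' n : ℕ, survival c x y n

/-- `U_z^{xy}`: the expected number of times `0 ≤ k < τ_y` with `X_k = z`, for the walk
started at `x`. -/
noncomputable def visitExp (c : V → V → ℝ) (x y z : V) : ℝ :=
  if z = y then 0 else ∑' n : ℕ, (killed c y ^ n) x z

theorem summable_of_add_le_mul {f : ℕ → ℝ} {q : ℝ} (N : ℕ) (hf : ∀ n, 0 ≤ f n) (hq1 : q < 1)
    (hfN : ∀ n, f (n + N) ≤ q * f n) : Summable f := by
  refine summable_of_sum_range_le hf (c := (∑ n ∈ range N, f n) / (1 - q)) fun K => ?_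
  have hmono : ∑ n ∈ range K, f n ≤ ∑ n ∈ range (N + K), f n :=
    sum_le_sum_of_subset_of_nonneg (range_subset_range.mpr (by omega)) fun n _ _ => hf n
  have hshift : ∑ n ∈ range (N + K), f n ≤ ∑ n ∈ range N, f n + q * ∑ n ∈ range K, f n := by
    rw [sum_range_add, mul_sum]
    gcongr with n
    rw [add_comm]
    exact hfN n
  rw [le_div_iff₀ (by linarith)]
  linarith

theorem SimpleGraph.Preconnected.forall_of_adj {α : Type*} {G : SimpleGraph α}
    (hG : G.Preconnected) {p : α → Prop} (hp : ∀ u v, G.Adj u v → p u → p v) {a : α} (ha : p a)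
    (b : α) : p b := by
  induction (reachable_iff_reflTransGen a b).mp (hG a b) with
  | refl => exact ha
  | tail _ hbc ih => exact hp _ _ hbc ih

namespace Matrix

variable {Q : Matrix V V ℝ}

theorem sum_pow_add_apply (m n : ℕ) (u : V) :
    ∑ z, (Q ^ (m + n)) u z = ∑ v, (Q ^ m) u v * ∑ z, (Q ^ n) v z := by
  simp only [pow_add, mul_apply, mul_sum]
  exact sum_comm

theorem sum_pow_add_apply_le (hQ : ∀ u v, 0 ≤ Q u v) {n : ℕ} {q : ℝ}
    (hq : ∀ v, ∑ z, (Q ^ n) v z ≤ q) (k : ℕ) (u : V) :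
    ∑ z, (Q ^ (k + n)) u z ≤ q * ∑ z, (Q ^ k) u z := by
  rw [sum_pow_add_apply, mul_sum]
  refine sum_le_sum fun v _ => ?_
  rw [mul_comm q]
  exact mul_le_mul_of_nonneg_left (hq v) (pow_apply_nonneg hQ k u v)

theorem sum_pow_apply_antitone (hQ : ∀ u v, 0 ≤ Q u v) (hQ1 : ∀ u, ∑ v, Q u v ≤ 1) (u : V) :
    Antitone fun n => ∑ z, (Q ^ n) u z :=
  antitone_nat_of_succ_le fun n => by
    simpa only [pow_one, one_mul] using
      sum_pow_add_apply_le hQ (n := 1) (q := 1) (by simpa using hQ1) n u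

theorem sum_pow_apply_le_one (hQ : ∀ u v, 0 ≤ Q u v) (hQ1 : ∀ u, ∑ v, Q u v ≤ 1) (n : ℕ)
    (u : V) : ∑ z, (Q ^ n) u z ≤ 1 :=
  (sum_pow_apply_antitone hQ hQ1 u n.zero_le).trans_eq (by simp [one_apply])

theorem summable_sum_pow_apply (hQ : ∀ u v, 0 ≤ Q u v) (hQ1 : ∀ u, ∑ v, Q u v ≤ 1)
    (htr : ∀ u, ∃ n, ∑ v, (Q ^ n) u v < 1) (u : V) :
    Summable fun n => ∑ v, (Q ^ n) u v := by
  choose n hn using htr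
  set N := univ.sup n
  have hN : ∀ v, ∑ z, (Q ^ N) v z < 1 := fun v =>
    (sum_pow_apply_antitone hQ hQ1 v (le_sup (mem_univ v))).trans_lt (hn v)
  set q := univ.sup' ⟨u, mem_univ u⟩ fun v => ∑ z, (Q ^ N) v z
  have hq : ∀ v, ∑ z, (Q ^ N) v z ≤ q := fun v =>
    le_sup' (fun v => ∑ z, (Q ^ N) v z) (mem_univ v)
  exact summable_of_add_le_mul N (fun k => sum_nonneg fun v _ => pow_apply_nonneg hQ k u v)
    ((sup'_lt_iff _).mpr fun v _ => hN v) (sum_pow_add_apply_le hQ hq · u)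

theorem summable_pow_apply (hQ : ∀ u v, 0 ≤ Q u v) (hQ1 : ∀ u, ∑ v, Q u v ≤ 1)
    (htr : ∀ u, ∃ n, ∑ v, (Q ^ n) u v < 1) (u w : V) : Summable fun n => (Q ^ n) u w :=
  (summable_sum_pow_apply hQ hQ1 htr u).of_nonneg_of_le (fun n => pow_apply_nonneg hQ n u w)
    fun n => single_le_sum (fun v _ => pow_apply_nonneg hQ n u v) (mem_univ w)

theorem tsum_pow_apply_eq_one_apply_add {x : V} (hs : ∀ w, Summable fun n => (Q ^ n) x w)
    (w : V) : ∑' n, (Q ^ n) x w = (1 : Matrix V V ℝ) x w + ∑ v, (∑' n, (Q ^ n) x v) * Q v w := by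
  rw [(hs w).tsum_eq_zero_add, pow_zero]
  simp only [pow_succ, mul_apply]
  rw [Summable.tsum_finsetSum fun v _ => (hs v).mul_right _]
  simp only [tsum_mul_right]

end Matrix

section WeightedGraph

omit [DecidableEq V]

variable {c : V → V → ℝ}

theorem le_nodeWeight (hnn : ∀ u v, 0 ≤ c u v) (u v : V) : c u v ≤ nodeWeight c u :=
  single_le_sum (fun w _ => hnn u w) (mem_univ v)

theorem transProb_nonneg (hnn : ∀ u v, 0 ≤ c u v) (u v : V) : 0 ≤ transProb c u v :=
  div_nonneg (hnn u v) ((hnn u v).trans (le_nodeWeight hnn u v))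

theorem transProb_pos (hnn : ∀ u v, 0 ≤ c u v) {u v : V} (h : 0 < c u v) : 0 < transProb c u v :=
  div_pos h (h.trans_le (le_nodeWeight hnn u v))

theorem sum_transProb_eq_div (u : V) : ∑ v, transProb c u v = nodeWeight c u / nodeWeight c u :=
  (sum_div ..).symm

omit [Fintype V] in
theorem pos_of_adj_fromRel (hsym : ∀ u v, c u v = c v u) {u v : V}
    (h : (SimpleGraph.fromRel fun u v : V => 0 < c u v).Adj u v) : 0 < c u v :=
  ((SimpleGraph.fromRel_adj _ u v).mp h).2.elim id (hsym u v ▸ ·)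

theorem nodeWeight_pos (hsym : ∀ u v, c u v = c v u) (hnn : ∀ u v, 0 ≤ c u v)
    (hconn : (SimpleGraph.fromRel fun u v : V => 0 < c u v).Connected) {u v : V} (huv : u ≠ v) :
    0 < nodeWeight c u := by
  obtain ⟨w, huw⟩ := (hconn.preconnected u v).nonempty_neighborSet_left huv
  exact (pos_of_adj_fromRel hsym huw).trans_le (le_nodeWeight hnn u w)

theorem sum_transProb_mul_div_nodeWeight (hsym : ∀ u v, c u v = c v u) {f : V → ℝ}
    (hf : ∀ w, ∑ v, f v * transProb c v w = f w) (v : V) :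
    ∑ w, transProb c v w * (f w / nodeWeight c w) = f v / nodeWeight c v := by
  have hrev : ∀ w, transProb c v w * (f w / nodeWeight c w) =
      f w * transProb c w v / nodeWeight c v := fun w => by
    simp only [transProb, hsym v w]
    ring
  rw [sum_congr rfl fun w _ => hrev w, ← sum_div, hf]

theorem eq_of_sum_transProb_mul_eq (hsym : ∀ u v, c u v = c v u) (hnn : ∀ u v, 0 ≤ c u v)
    (hconn : (SimpleGraph.fromRel fun u v : V => 0 < c u v).Connected) {h : V → ℝ}
    (hh : ∀ v, ∑ w, transProb c v w * h w = h v) (u v : V) : h u = h v := by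
  have : Nonempty V := ⟨u⟩
  obtain ⟨a, ha⟩ := Finite.exists_max h
  suffices hmax : ∀ b, h b = h a from (hmax u).trans (hmax v).symm
  refine hconn.preconnected.forall_of_adj (fun b b' hbb' hb => ?_) rfl
  have hcbb' := pos_of_adj_fromRel hsym hbb'
  by_contra hne
  have hlt : ∑ w, transProb c b w * h w < ∑ w, transProb c b w * h a :=
    sum_lt_sum (fun w _ => mul_le_mul_of_nonneg_left (ha w) (transProb_nonneg hnn b w))
      ⟨b', mem_univ b', mul_lt_mul_of_pos_left ((ha b').lt_of_ne hne) (transProb_pos hnn hcbb')⟩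
  rw [hh, hb, ← sum_mul, sum_transProb_eq_div,
    div_self (hcbb'.trans_le (le_nodeWeight hnn b b')).ne', one_mul] at hlt
  exact hlt.false

end WeightedGraph

section KilledWalk

variable {c : V → V → ℝ}

theorem killed_nonneg (hnn : ∀ u v, 0 ≤ c u v) (t u v : V) : 0 ≤ killed c t u v := by
  simp only [killed, Matrix.of_apply]
  split_ifs
  exacts [le_rfl, transProb_nonneg hnn u v]

theorem sum_killed_apply (t u : V) :
    ∑ v, killed c t u v = if u = t then 0 else ∑ v, transProb c u v := by
  simp only [killed, Matrix.of_apply]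
  split_ifs <;> simp

theorem sum_killed_apply_le_one (t u : V) : ∑ v, killed c t u v ≤ 1 := by
  rw [sum_killed_apply, sum_transProb_eq_div]
  split_ifs
  exacts [zero_le_one, div_self_le_one _]

theorem exists_sum_killed_pow_apply_lt_one (hsym : ∀ u v, c u v = c v u)
    (hnn : ∀ u v, 0 ≤ c u v) (hconn : (SimpleGraph.fromRel fun u v : V => 0 < c u v).Connected)
    (t u : V) : ∃ n, ∑ v, (killed c t ^ n) u v < 1 := by
  refine hconn.preconnected.forall_of_adj (p := fun u => ∃ n, ∑ v, (killed c t ^ n) u v < 1)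
    (fun b a hba hb => ?_) (a := t) ⟨1, by simp [sum_killed_apply]⟩ u
  obtain ⟨n, hn⟩ := hb
  refine ⟨1 + n, ?_⟩
  rw [Matrix.sum_pow_add_apply, pow_one]
  by_cases hat : a = t
  · simp [hat, killed]
  have hab : 0 < killed c t a b := by
    simpa [killed, hat] using transProb_pos hnn (pos_of_adj_fromRel hsym hba.symm)
  calc ∑ v, killed c t a v * ∑ z, (killed c t ^ n) v z < ∑ v, killed c t a v * 1 :=
        sum_lt_sum (fun v _ => mul_le_mul_of_nonneg_left
          (Matrix.sum_pow_apply_le_one (killed_nonneg hnn t) (sum_killed_apply_le_one t) n v)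
          (killed_nonneg hnn t a v)) ⟨b, mem_univ b, mul_lt_mul_of_pos_left hn hab⟩
    _ ≤ 1 := by simpa using sum_killed_apply_le_one t a

theorem summable_killed_pow_apply (hsym : ∀ u v, c u v = c v u) (hnn : ∀ u v, 0 ≤ c u v)
    (hconn : (SimpleGraph.fromRel fun u v : V => 0 < c u v).Connected) (t u w : V) :
    Summable fun n => (killed c t ^ n) u w :=
  Matrix.summable_pow_apply (killed_nonneg hnn t) (sum_killed_apply_le_one t)
    (exists_sum_killed_pow_apply_lt_one hsym hnn hconn t) u w

theorem killed_pow_apply_self_eq_sub (hsym : ∀ u v, c u v = c v u) (hnn : ∀ u v, 0 ≤ c u v)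
    (hconn : (SimpleGraph.fromRel fun u v : V => 0 < c u v).Connected) (t u : V) (n : ℕ) :
    (killed c t ^ n) u t = ∑ v, (killed c t ^ n) u v - ∑ v, (killed c t ^ (n + 1)) u v := by
  have hrow : ∀ v, ∑ z, killed c t v z = 1 - (1 : Matrix V V ℝ) v t := fun v => by
    rw [sum_killed_apply, Matrix.one_apply, sum_transProb_eq_div]
    split_ifs with hv
    · ring
    · rw [div_self (nodeWeight_pos hsym hnn hconn hv).ne', sub_zero]
  simp only [Matrix.sum_pow_add_apply, pow_one, hrow, mul_sub, mul_one, sum_sub_distrib,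
    ← Matrix.mul_apply]
  ring

theorem hasSum_killed_pow_apply_self (hsym : ∀ u v, c u v = c v u) (hnn : ∀ u v, 0 ≤ c u v)
    (hconn : (SimpleGraph.fromRel fun u v : V => 0 < c u v).Connected) (t u : V) :
    HasSum (fun n => (killed c t ^ n) u t) 1 := by
  have hmass := (Matrix.summable_sum_pow_apply (killed_nonneg hnn t)
    (sum_killed_apply_le_one t) (exists_sum_killed_pow_apply_lt_one hsym hnn hconn t)
    u).tendsto_atTop_zero
  rw [hasSum_iff_tendsto_nat_of_nonneg (Matrix.pow_apply_nonneg (killed_nonneg hnn t) · u t)]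
  simp only [killed_pow_apply_self_eq_sub hsym hnn hconn, sum_range_sub', pow_zero]
  simpa [Matrix.one_apply] using hmass.const_sub 1

theorem sum_visitExp_mul_transProb (hsym : ∀ u v, c u v = c v u) (hnn : ∀ u v, 0 ≤ c u v)
    (hconn : (SimpleGraph.fromRel fun u v : V => 0 < c u v).Connected) (x y w : V) :
    ∑ v, visitExp c x y v * transProb c v w =
      visitExp c x y w + (if w = y then 1 else 0) - (if w = x then 1 else 0) := by
  have hterm : ∀ v, visitExp c x y v * transProb c v w =
      (∑' n, (killed c y ^ n) x v) * killed c y v w := fun v => by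
    by_cases hv : v = y <;> simp [visitExp, killed, hv]
  have hgreen := Matrix.tsum_pow_apply_eq_one_apply_add
    (summable_killed_pow_apply hsym hnn hconn y x) w
  have hhit := (hasSum_killed_pow_apply_self hsym hnn hconn y x).tsum_eq
  rw [sum_congr rfl fun v _ => hterm v]
  simp only [visitExp, Matrix.one_apply, eq_comm (a := x)] at hgreen ⊢
  split_ifs at hgreen ⊢ <;> subst_vars <;> linarith

end KilledWalk

/-- For the random walk on a finite connected weighted graph and any two
distinct vertices `x ≠ y`, the quantity `(U_w^{xy} + U_w^{yx})/μ_w` is independent of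
`w ∈ V`: there is a constant `R` (the effective resistance between `x` and `y`) such that
`U_w^{xy} + U_w^{yx} = R · μ_w` for all `w ∈ V`. -/
theorem round_trip_visits_proportional_to_weight
    (c : V → V → ℝ) (hsym : ∀ u v, c u v = c v u) (hnn : ∀ u v, 0 ≤ c u v)
    (hconn : (SimpleGraph.fromRel fun u v : V => 0 < c u v).Connected)
    (x y : V) (hxy : x ≠ y) :
    ∃ R : ℝ, ∀ w : V, visitExp c x y w + visitExp c y x w = R * nodeWeight c w := by
  set f := fun w => visitExp c x y w + visitExp c y x w
  have hstat : ∀ w, ∑ v, f v * transProb c v w = f w := fun w => by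
    simp only [f, add_mul, sum_add_distrib, sum_visitExp_mul_transProb hsym hnn hconn]
    ring
  have hharm := sum_transProb_mul_div_nodeWeight hsym hstat
  have : Nontrivial V := ⟨x, y, hxy⟩
  refine ⟨f x / nodeWeight c x, fun w => ?_⟩
  obtain ⟨v, hwv⟩ := exists_ne w
  rw [← eq_of_sum_transProb_mul_eq hsym hnn hconn hharm w x,
    div_mul_cancel₀ _ (nodeWeight_pos hsym hnn hconn hwv.symm).ne']
end

section
/- The limit degree distribution of the preferential attachment model is a probability distribution: for every integer m ≥ 1 and real δ > −m, the numbers p_k = (2 + δ/m) · Γ(k+δ)Γ(m+2+δ+δ/m) / (Γ(m+δ)Γ(k+3+δ+δ/m)) for k ≥ m (and p_k = 0 for k < m) are nonnegative and satisfy ∑_{k=m}^{∞} p_k = 1. -/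
/-- The limiting degree distribution of the preferential attachment model with parameters
`m ≥ 1` and `δ > −m`: `p_k = 0` for `k < m` and
`p_k = (2 + δ/m) · Γ(k+δ)Γ(m+2+δ+δ/m) / (Γ(m+δ)Γ(k+3+δ+δ/m))` for `k ≥ m`. -/
noncomputable def paLimitDist (m : ℕ) (δ : ℝ) (k : ℕ) : ℝ :=
  if k < m then 0
  else (2 + δ / m) *
    (Real.Gamma ((k : ℝ) + δ) * Real.Gamma ((m : ℝ) + 2 + δ + δ / m)) /
      (Real.Gamma ((m : ℝ) + δ) * Real.Gamma ((k : ℝ) + 3 + δ + δ / m))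

/-!
With `x = m + δ` and `s = 2 + δ / m ≥ 1`, the recursion `Γ(y + 1) = y Γ(y)` gives
`p_{m+n} = Γ(x + s) / Γ(x) · (f n - f (n + 1))` for `f n = Γ(x + n) / Γ(x + n + s)`, so the series
telescopes to `Γ(x + s) / Γ(x) · f 0 = 1`, because `f n ≤ 1 / (x + n) → 0`: monotonicity of `Γ` on
`[2, ∞)` gives `Γ(y + s) ≥ Γ(y + 1) = y Γ(y)` for `y ≥ 1`.
-/

open Filter Topology

theorem hasSum_sub_succ_of_tendsto {f : ℕ → ℝ} {l : ℝ} (hf : ∀ n, f (n + 1) ≤ f n)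
    (hl : Tendsto f atTop (𝓝 l)) : HasSum (fun n ↦ f n - f (n + 1)) (f 0 - l) := by
  rw [hasSum_iff_tendsto_nat_of_nonneg fun n ↦ sub_nonneg.mpr (hf n)]
  simp_rw [Finset.sum_range_sub']
  exact tendsto_const_nhds.sub hl

namespace Real

theorem Gamma_div_Gamma_add_sub_succ {x s : ℝ} (hx : 0 < x) (hxs : 0 < x + s) :
    Gamma x / Gamma (x + s) - Gamma (x + 1) / Gamma (x + 1 + s) =
      s * Gamma x / Gamma (x + s + 1) := by
  have hΓ : Gamma (x + s) ≠ 0 := (Gamma_pos_of_pos hxs).ne'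
  rw [add_right_comm, Gamma_add_one hx.ne', Gamma_add_one hxs.ne']
  field_simp
  ring

theorem Gamma_div_Gamma_add_le_inv {y s : ℝ} (hy : 1 ≤ y) (hs : 1 ≤ s) :
    Gamma y / Gamma (y + s) ≤ y⁻¹ := by
  have hy0 : 0 < y := by linarith
  have hmono : Gamma (y + 1) ≤ Gamma (y + s) :=
    Gamma_strictMonoOn_Ici.monotoneOn (by simp; linarith) (by simp; linarith) (by linarith)
  rw [Gamma_add_one hy0.ne'] at hmono
  rw [div_le_iff₀ (Gamma_pos_of_pos (by linarith)), le_inv_mul_iff₀ hy0]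
  exact hmono

theorem tendsto_Gamma_add_nat_div_Gamma_add_nat (x : ℝ) {s : ℝ} (hs : 1 ≤ s) :
    Tendsto (fun n : ℕ ↦ Gamma (x + n) / Gamma (x + n + s)) atTop (𝓝 0) := by
  have hx : Tendsto (fun n : ℕ ↦ x + n) atTop atTop :=
    tendsto_atTop_add_const_left _ _ tendsto_natCast_atTop_atTop
  have h1 : ∀ᶠ n : ℕ in atTop, 1 ≤ x + n := hx.eventually_ge_atTop 1
  refine squeeze_zero' ?_ ?_ (tendsto_inv_atTop_zero.comp hx)
  · filter_upwards [h1] with n hn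
    exact div_nonneg (Gamma_nonneg_of_nonneg (by linarith)) (Gamma_nonneg_of_nonneg (by linarith))
  · filter_upwards [h1] with n hn
    exact Gamma_div_Gamma_add_le_inv hn hs

theorem hasSum_mul_Gamma_add_nat_div_Gamma_add_nat {x s : ℝ} (hx : 0 < x) (hs : 1 ≤ s) :
    HasSum (fun n : ℕ ↦ s * Gamma (x + n) / Gamma (x + n + s + 1)) (Gamma x / Gamma (x + s)) := by
  set f : ℕ → ℝ := fun n ↦ Gamma (x + n) / Gamma (x + n + s)
  have hx' : ∀ n : ℕ, 0 < x + n := fun n ↦ by positivity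
  have hstep : ∀ n : ℕ, f n - f (n + 1) = s * Gamma (x + n) / Gamma (x + n + s + 1) := fun n ↦ by
    simpa [f, add_assoc] using Gamma_div_Gamma_add_sub_succ (hx' n) (s := s) (by linarith [hx' n])
  have hanti : ∀ n, f (n + 1) ≤ f n := fun n ↦ by
    have : 0 < x + n + s + 1 := by linarith [hx' n]
    rw [← sub_nonneg, hstep]
    exact div_nonneg (mul_nonneg (by linarith) (Gamma_pos_of_pos (hx' n)).le)
      (Gamma_pos_of_pos this).le
  have hsum := hasSum_sub_succ_of_tendsto hanti (tendsto_Gamma_add_nat_div_Gamma_add_nat x hs)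
  simp only [hstep] at hsum
  simpa [f] using hsum

end Real

open Real

theorem neg_one_lt_div_natCast {m : ℕ} {δ : ℝ} (hδ : -(m : ℝ) < δ) : -1 < δ / m := by
  rcases m.eq_zero_or_pos with rfl | hm
  · simp
  · rwa [lt_div_iff₀ (by exact_mod_cast hm), neg_one_mul]

section paLimitDist

variable {m : ℕ} {δ : ℝ}

theorem paLimitDist_of_lt {k : ℕ} (hk : k < m) : paLimitDist m δ k = 0 := if_pos hk

theorem paLimitDist_add (n : ℕ) :
    paLimitDist m δ (n + m) =
      Gamma (m + δ + (2 + δ / m)) / Gamma (m + δ) *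
        ((2 + δ / m) * Gamma (m + δ + n) / Gamma (m + δ + n + (2 + δ / m) + 1)) := by
  rw [paLimitDist, if_neg (by omega), Nat.cast_add,
    show (n + m : ℝ) + δ = m + δ + n by ring,
    show (m : ℝ) + 2 + δ + δ / m = m + δ + (2 + δ / m) by ring,
    show (n + m : ℝ) + 3 + δ + δ / m = m + δ + n + (2 + δ / m) + 1 by ring]
  ring

theorem paLimitDist_nonneg (hδ : -(m : ℝ) < δ) (k : ℕ) : 0 ≤ paLimitDist m δ k := by
  rcases lt_or_ge k m with hk | hk
  · exact (paLimitDist_of_lt hk).ge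
  obtain ⟨n, rfl⟩ := Nat.exists_eq_add_of_le' hk
  have hs : 0 < 2 + δ / m := by linarith [neg_one_lt_div_natCast hδ]
  have hx : 0 < (m : ℝ) + δ := by linarith
  have hxn : 0 < (m : ℝ) + δ + n := by positivity
  rw [paLimitDist_add]
  exact mul_nonneg (div_nonneg (Gamma_pos_of_pos (by positivity)).le (Gamma_pos_of_pos hx).le)
    (div_nonneg (mul_pos hs (Gamma_pos_of_pos hxn)).le (Gamma_pos_of_pos (by positivity)).le)

theorem hasSum_paLimitDist (hδ : -(m : ℝ) < δ) : HasSum (paLimitDist m δ) 1 := by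
  have hs : 1 ≤ 2 + δ / m := by linarith [neg_one_lt_div_natCast hδ]
  have hx : 0 < (m : ℝ) + δ := by linarith
  have hnorm : Gamma (m + δ + (2 + δ / m)) / Gamma (m + δ) *
      (Gamma (m + δ) / Gamma (m + δ + (2 + δ / m))) = 1 := by
    have := (Gamma_pos_of_pos hx).ne'
    have := (Gamma_pos_of_pos (s := m + δ + (2 + δ / m)) (by linarith)).ne'
    field_simp
  have htail : HasSum (fun n ↦ paLimitDist m δ (n + m)) 1 := by
    simp_rw [paLimitDist_add]
    simpa [hnorm] using (hasSum_mul_Gamma_add_nat_div_Gamma_add_nat hx hs).mul_left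
      (Gamma (m + δ + (2 + δ / m)) / Gamma (m + δ))
  simpa [Finset.sum_eq_zero fun k hk ↦ paLimitDist_of_lt (Finset.mem_range.mp hk)]
    using (hasSum_nat_add_iff m).mp htail

end paLimitDist

theorem pa_limit_dist_is_probability_distribution_general (m : ℕ)
    (δ : ℝ) (hδ : -(m : ℝ) < δ) :
    (∀ k : ℕ, 0 ≤ paLimitDist m δ k) ∧ ∑' k : ℕ, paLimitDist m δ k = 1 :=
  ⟨paLimitDist_nonneg hδ, (hasSum_paLimitDist hδ).tsum_eq⟩

/-- The limit degree distribution of the preferential attachment model is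
a probability distribution: for every integer `m ≥ 1` and real `δ > −m`, the numbers `p_k`
are nonnegative and satisfy `∑_{k=m}^∞ p_k = 1` (equivalently, `∑_{k=0}^∞ p_k = 1` since
`p_k = 0` for `k < m`). -/
theorem pa_limit_dist_is_probability_distribution (m : ℕ) (hm : 1 ≤ m)
    (δ : ℝ) (hδ : -(m : ℝ) < δ) :
    (∀ k : ℕ, 0 ≤ paLimitDist m δ k) ∧ ∑' k : ℕ, paLimitDist m δ k = 1 :=
  pa_limit_dist_is_probability_distribution_general m δ hδ
end

section
/- Power-law asymptotics of the limit degree distribution: for every integer m ≥ 1 and real δ > −m, with p_k = (2 + δ/m) · Γ(k+δ)Γ(m+2+δ+δ/m) / (Γ(m+δ)Γ(k+3+δ+δ/m)) for k ≥ m, one has lim_{k→∞} k^{3+δ/m} · p_k = (2 + δ/m) · Γ(m+2+δ+δ/m)/Γ(m+δ). In other words, p_k ~ c_{m,δ} · k^{−τ} as k → ∞ with τ = 3 + δ/m and c_{m,δ} = (2+δ/m)Γ(m+2+δ+δ/m)/Γ(m+δ), so the preferential attachment graph is scale free with exponent τ = 3 + δ/m. -/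
open Filter Asymptotics Topology

lemma isEquivalent_add_const_self (c : ℝ) : (fun x : ℝ ↦ x + c) ~[atTop] fun x ↦ x :=
  IsEquivalent.refl.add_const_of_norm_tendsto_atTop tendsto_norm_atTop_atTop

lemma isEquivalent_add_const_rpow (c a : ℝ) :
    (fun x : ℝ ↦ (x + c) ^ a) ~[atTop] fun x ↦ x ^ a := by
  have habs : (fun x : ℝ ↦ x) =ᶠ[atTop] fun x ↦ |x| :=
    (eventually_ge_atTop 0).mono fun x hx ↦ (abs_of_nonneg hx).symm
  refine (((isEquivalent_add_const_self c).congr_right habs).rpow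
    fun x ↦ abs_nonneg x).congr_right ?_
  filter_upwards [habs] with x hx
  simp only [Pi.pow_apply, ← hx]

namespace Real

lemma Gamma_add_le_Gamma_mul_rpow {x a : ℝ} (hx : 0 < x) (ha : 0 < a) (ha1 : a < 1) :
    Gamma (x + a) ≤ Gamma x * x ^ a := by
  have hconv := Gamma_mul_add_mul_le_rpow_Gamma_mul_rpow_Gamma hx (by linarith : 0 < x + 1)
    (by linarith : 0 < 1 - a) ha (by ring)
  rw [show (1 - a) * x + a * (x + 1) = x + a by ring, Gamma_add_one hx.ne',
    mul_rpow hx.le (Gamma_pos_of_pos hx).le] at hconv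
  calc Gamma (x + a) ≤ Gamma x ^ (1 - a) * (x ^ a * Gamma x ^ a) := hconv
    _ = Gamma x ^ (1 - a + a) * x ^ a := by rw [rpow_add (Gamma_pos_of_pos hx)]; ring
    _ = Gamma x * x ^ a := by rw [sub_add_cancel, rpow_one]

lemma mul_Gamma_le_Gamma_add_mul_rpow {x a : ℝ} (hx : 0 < x) (ha : 0 < a) (ha1 : a < 1) :
    x * Gamma x ≤ Gamma (x + a) * (x + a) ^ (1 - a) := by
  have h := Gamma_add_le_Gamma_mul_rpow (x := x + a) (a := 1 - a) (by linarith) (by linarith)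
    (by linarith)
  rwa [show x + a + (1 - a) = x + 1 by ring, Gamma_add_one hx.ne'] at h

lemma isEquivalent_Gamma_add_of_nonneg_of_lt_one {a : ℝ} (ha : 0 ≤ a) (ha1 : a < 1) :
    (fun x ↦ Gamma (x + a)) ~[atTop] fun x ↦ Gamma x * x ^ a := by
  rcases ha.eq_or_lt with rfl | ha
  · simpa using IsEquivalent.refl
  refine isEquivalent_of_tendsto_one ?_
  have hlower : Tendsto (fun x : ℝ ↦ (x / (x + a)) ^ (1 - a)) atTop (𝓝 1) := by
    have hratio := (isEquivalent_iff_tendsto_one (eventually_gt_atTop 0 |>.mono fun x hx ↦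
      (by linarith : 0 < x + a).ne')).1 (isEquivalent_add_const_self a).symm
    simpa using hratio.rpow_const (p := 1 - a) (Or.inl one_ne_zero)
  refine tendsto_of_tendsto_of_tendsto_of_le_of_le' hlower tendsto_const_nhds ?_ ?_
  all_goals filter_upwards [eventually_gt_atTop 0] with x hx
  all_goals have hΓx := Gamma_pos_of_pos hx
  · rw [div_rpow hx.le (by linarith), Pi.div_apply,
      div_le_div_iff₀ (rpow_pos_of_pos (by linarith) _) (by positivity)]
    calc x ^ (1 - a) * (Gamma x * x ^ a) = x ^ (1 - a + a) * Gamma x := by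
          rw [rpow_add hx]; ring
      _ = x * Gamma x := by rw [sub_add_cancel, rpow_one]
      _ ≤ Gamma (x + a) * (x + a) ^ (1 - a) := mul_Gamma_le_Gamma_add_mul_rpow hx ha ha1
  · rw [Pi.div_apply, div_le_one (by positivity)]
    exact Gamma_add_le_Gamma_mul_rpow hx ha ha1

lemma isEquivalent_Gamma_add_add_one_iff (a : ℝ) :
    ((fun x ↦ Gamma (x + (a + 1))) ~[atTop] fun x ↦ Gamma x * x ^ (a + 1)) ↔
      (fun x ↦ Gamma (x + a)) ~[atTop] fun x ↦ Gamma x * x ^ a := by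
  have hshift : (fun x ↦ Gamma (x + (a + 1))) =ᶠ[atTop] fun x ↦ (x + a) * Gamma (x + a) := by
    filter_upwards [eventually_gt_atTop (-a)] with x hx
    rw [← add_assoc, Gamma_add_one (by linarith)]
  have hpow : (fun x ↦ Gamma x * x ^ (a + 1)) =ᶠ[atTop] fun x ↦ x * (Gamma x * x ^ a) := by
    filter_upwards [eventually_gt_atTop 0] with x hx
    rw [rpow_add_one hx.ne']; ring
  constructor
  · intro h
    have hmul := (h.congr_left hshift).congr_right hpow
    refine (((isEquivalent_add_const_self a).inv.mul hmul).congr_left ?_).congr_right ?_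
    all_goals filter_upwards [eventually_gt_atTop (max 0 (-a))] with x hx
    all_goals simp only [Pi.mul_apply, Pi.inv_apply]
    · rw [inv_mul_cancel_left₀ (by linarith [le_max_right 0 (-a)])]
    · rw [inv_mul_cancel_left₀ (by linarith [le_max_left 0 (-a)])]
  · intro h
    exact (((isEquivalent_add_const_self a).mul h).congr_left hshift.symm).congr_right hpow.symm

theorem isEquivalent_Gamma_add (a : ℝ) :
    (fun x ↦ Gamma (x + a)) ~[atTop] fun x ↦ Gamma x * x ^ a := by
  have hfract := isEquivalent_Gamma_add_of_nonneg_of_lt_one (Int.fract_nonneg a)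
    (Int.fract_lt_one a)
  rw [← Int.fract_add_floor a]
  induction ⌊a⌋ using Int.induction_on with
  | zero => simpa using hfract
  | succ n ih => rwa [Int.cast_add, Int.cast_one, ← add_assoc,
      isEquivalent_Gamma_add_add_one_iff]
  | pred n ih => rwa [← isEquivalent_Gamma_add_add_one_iff, Int.cast_sub, Int.cast_one,
      ← add_sub_assoc, sub_add_cancel]

theorem tendsto_rpow_mul_Gamma_div_Gamma_add (a c : ℝ) :
    Tendsto (fun x : ℝ ↦ x ^ a * Gamma (x + c) / Gamma (x + c + a)) atTop (𝓝 1) := by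
  have hequiv : (fun x ↦ Gamma (x + c) * x ^ a) ~[atTop] fun x ↦ Gamma (x + c + a) :=
    (((isEquivalent_Gamma_add a).comp_tendsto
      (tendsto_atTop_add_const_right _ c tendsto_id)).trans
        (IsEquivalent.refl.mul (isEquivalent_add_const_rpow c a))).symm
  have hne : ∀ᶠ x in atTop, Gamma (x + c + a) ≠ 0 :=
    (eventually_gt_atTop (-c - a)).mono fun x hx ↦ (Gamma_pos_of_pos (by linarith)).ne'
  refine ((isEquivalent_iff_tendsto_one hne).1 hequiv).congr fun x ↦ ?_
  simp only [Pi.div_apply, mul_comm]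

end Real

theorem pa_limit_dist_power_law_general (m : ℕ) (δ : ℝ) :
    Filter.Tendsto (fun k : ℕ => (k : ℝ) ^ ((3 : ℝ) + δ / m) * paLimitDist m δ k)
      Filter.atTop
      (nhds ((2 + δ / m) * Real.Gamma ((m : ℝ) + 2 + δ + δ / m) /
        Real.Gamma ((m : ℝ) + δ))) := by
  have hlim := ((Real.tendsto_rpow_mul_Gamma_div_Gamma_add (3 + δ / m) δ).comp
    tendsto_natCast_atTop_atTop).const_mul
      ((2 + δ / m) * Real.Gamma ((m : ℝ) + 2 + δ + δ / m) / Real.Gamma ((m : ℝ) + δ))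
  rw [mul_one] at hlim
  refine hlim.congr' ?_
  filter_upwards [eventually_ge_atTop m] with k hk
  rw [Function.comp_apply, paLimitDist, if_neg (not_lt.2 hk),
    show (k : ℝ) + 3 + δ + δ / m = k + δ + (3 + δ / m) by ring]
  ring

/-- **Power-law asymptotics of the limit degree distribution.** For every
integer `m ≥ 1` and real `δ > −m`,
`lim_{k→∞} k^{3+δ/m} · p_k = (2 + δ/m) · Γ(m+2+δ+δ/m)/Γ(m+δ)`; that is,
`p_k ~ c_{m,δ} k^{−τ}` with `τ = 3 + δ/m` and
`c_{m,δ} = (2+δ/m)Γ(m+2+δ+δ/m)/Γ(m+δ)`: the preferential attachment graph is scale free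
with exponent `τ = 3 + δ/m`. -/
theorem pa_limit_dist_power_law (m : ℕ) (hm : 1 ≤ m) (δ : ℝ) (hδ : -(m : ℝ) < δ) :
    Filter.Tendsto (fun k : ℕ => (k : ℝ) ^ ((3 : ℝ) + δ / m) * paLimitDist m δ k)
      Filter.atTop
      (nhds ((2 + δ / m) * Real.Gamma ((m : ℝ) + 2 + δ + δ / m) /
        Real.Gamma ((m : ℝ) + δ))) :=
  pa_limit_dist_power_law_general m δ
end
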